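/- Let α, β, γ : (0, ∞) → ℝ be continuously differentiable functions satisfying the ideal scaling conditions β̇_t = 2α̇_t + e^{α_t} and γ̇_t = −α̇_t + e^{α_t} for all t > 0. Let τ : (0, ∞) → (0, ∞) be twice continuously differentiable and strictly increasing with τ̇(t) > 0, and define α^{(τ)}_t = α_{τ(t)} + log τ̇(t), β^{(τ)}_t = β_{τ(t)} + 2 log τ̇(t), and γ^{(τ)}_t = γ_{τ(t)} − log τ̇(t). Then α^{(τ)}, β^{(τ)}, γ^{(τ)} also satisfy the ideal scaling conditions: d/dt β^{(τ)}_t = 2 d/dt α^{(τ)}_t + e^{α^{(τ)}_t} and d/dt γ^{(τ)}_t = −d/dt α^{(τ)}_t + e^{α^{(τ)}_t} for all t > 0. -/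

import Mathlib

/-!
By the chain rule each dilated parameter has derivative `τ̇ · (old derivative ∘ τ)` plus its
log-weight times `τ̈ / τ̇`. The log-weights `1, 2, -1` of `α, β, γ` are exactly the coefficients of
`α̇` in the two ideal scaling conditions, so the `τ̈` terms balance, and the remaining factor `τ̇`
is absorbed by `e^{α_τ + log τ̇} = τ̇ e^{α_τ}`.
-/

open Real Set

noncomputable section

theorem scaling_relation_time_dilation {a a' b' k v w : ℝ} (hv : 0 < v)
    (h : b' = k * a' + exp a) :
    b' * v + k * (w / v) = k * (a' * v + w / v) + exp (a + log v) := by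
  rw [exp_add, exp_log hv, h]
  ring

theorem ideal_scaling_closed_under_time_dilation
    (α β γ α' β' γ' : ℝ → ℝ)
    (hα : ∀ t ∈ Set.Ioi (0 : ℝ), HasDerivAt α (α' t) t)
    (hβ : ∀ t ∈ Set.Ioi (0 : ℝ), HasDerivAt β (β' t) t)
    (hγ : ∀ t ∈ Set.Ioi (0 : ℝ), HasDerivAt γ (γ' t) t)
    (hideal₁ : ∀ t ∈ Set.Ioi (0 : ℝ), β' t = 2 * α' t + Real.exp (α t))
    (hideal₂ : ∀ t ∈ Set.Ioi (0 : ℝ), γ' t = -α' t + Real.exp (α t))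
    (τ τ' τ'' : ℝ → ℝ)
    (hτpos : ∀ t ∈ Set.Ioi (0 : ℝ), 0 < τ t)
    (hτ : ∀ t ∈ Set.Ioi (0 : ℝ), HasDerivAt τ (τ' t) t)
    (hτ' : ∀ t ∈ Set.Ioi (0 : ℝ), HasDerivAt τ' (τ'' t) t)
    (hτ'pos : ∀ t ∈ Set.Ioi (0 : ℝ), 0 < τ' t) :
    ∀ t ∈ Set.Ioi (0 : ℝ), ∃ A' B' G' : ℝ,
      HasDerivAt (fun s : ℝ => α (τ s) + Real.log (τ' s)) A' t ∧
      HasDerivAt (fun s : ℝ => β (τ s) + 2 * Real.log (τ' s)) B' t ∧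
      HasDerivAt (fun s : ℝ => γ (τ s) - Real.log (τ' s)) G' t ∧
      B' = 2 * A' + Real.exp (α (τ t) + Real.log (τ' t)) ∧
      G' = -A' + Real.exp (α (τ t) + Real.log (τ' t)) := by
  intro t ht
  have hτt := hτpos t ht
  have hlog : HasDerivAt (fun s => log (τ' s)) (τ'' t / τ' t) t :=
    (hτ' t ht).log (hτ'pos t ht).ne'
  refine ⟨_, _, _, ((hα _ hτt).comp t (hτ t ht)).add hlog,
    ((hβ _ hτt).comp t (hτ t ht)).add (hlog.const_mul 2),
    ((hγ _ hτt).comp t (hτ t ht)).sub hlog, ?_, ?_⟩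
  · exact scaling_relation_time_dilation (hτ'pos t ht) (hideal₁ _ hτt)
  · have hγ_dilated := scaling_relation_time_dilation (w := τ'' t) (hτ'pos t ht)
      ((hideal₂ _ hτt).trans (by rw [neg_one_mul]))
    linarith
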